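/- For every n ≥ 1, χ'_st(K_{n,n}) − n ≤ χ'_st(K_n), where K_{n,n} is the complete bipartite graph with both parts of size n and K_n is the complete graph on n vertices. -/

import Mathlib

open SimpleGraph

/-- A star edge-coloring with `k` colors: a proper edge-coloring (adjacent edges get distinct
colors) such that no path with four edges and no cycle with four edges is bichromatic. -/
def IsStarEdgeColoring {V : Type*} (G : SimpleGraph V) {k : ℕ} (C : Sym2 V → Fin k) : Prop :=
  (∀ e₁ ∈ G.edgeSet, ∀ e₂ ∈ G.edgeSet, e₁ ≠ e₂ → (∃ v, v ∈ e₁ ∧ v ∈ e₂) → C e₁ ≠ C e₂) ∧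
  (∀ (u v : V) (w : G.Walk u v), w.length = 4 → w.IsPath →
    ¬ ∃ a b : Fin k, ∀ e ∈ w.edges, C e = a ∨ C e = b) ∧
  (∀ (u : V) (w : G.Walk u u), w.length = 4 → w.IsCycle →
    ¬ ∃ a b : Fin k, ∀ e ∈ w.edges, C e = a ∨ C e = b)

/-- The star chromatic index: the least `k` admitting a star edge-coloring with `k` colors. -/
noncomputable def starChromaticIndex {V : Type*} (G : SimpleGraph V) : ℕ :=
  sInf {k | ∃ C : Sym2 V → Fin k, IsStarEdgeColoring G C}

/-!
Fold `K_{n,n}` onto `K_n` by identifying the two copies of each vertex and pull a star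
edge-coloring of `K_n` back along the fold, giving each of the `n` collapsed edges `{i, i'}` its
own fresh color. A proper edge-coloring is a star edge-coloring exactly when no non-backtracking
walk with four edges is colored `a, b, a, b`. Such a walk upstairs repeats each of its colors on
two distinct edges, so it avoids the fresh colors; as the fold is injective on every
neighbourhood, it maps the walk to a walk of the same kind in `K_n`.
-/

variable {V W α : Type*} {G : SimpleGraph V} {k : ℕ}

def IsProperEdgeColoring (G : SimpleGraph V) (C : Sym2 V → α) : Prop :=
  ∀ ⦃x y z⦄, G.Adj x y → G.Adj x z → y ≠ z → C s(x, y) ≠ C s(x, z)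

def IsAlternatingFourWalk (G : SimpleGraph V) (C : Sym2 V → α) (x₀ x₁ x₂ x₃ x₄ : V) : Prop :=
  G.Adj x₀ x₁ ∧ G.Adj x₁ x₂ ∧ G.Adj x₂ x₃ ∧ G.Adj x₃ x₄ ∧ x₀ ≠ x₂ ∧ x₁ ≠ x₃ ∧ x₂ ≠ x₄ ∧
    C s(x₀, x₁) = C s(x₂, x₃) ∧ C s(x₁, x₂) = C s(x₃, x₄)

theorem isProperEdgeColoring_iff {C : Sym2 V → α} :
    IsProperEdgeColoring G C ↔
      ∀ e₁ ∈ G.edgeSet, ∀ e₂ ∈ G.edgeSet, e₁ ≠ e₂ → (∃ v, v ∈ e₁ ∧ v ∈ e₂) → C e₁ ≠ C e₂ := by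
  constructor
  · rintro hC e₁ he₁ e₂ he₂ hne ⟨v, hv₁, hv₂⟩
    obtain ⟨y, rfl⟩ := Sym2.mem_iff_exists.1 hv₁
    obtain ⟨z, rfl⟩ := Sym2.mem_iff_exists.1 hv₂
    exact hC he₁ he₂ fun hyz => hne (hyz ▸ rfl)
  · intro hC x y z hxy hxz hyz
    exact hC _ hxy _ hxz (Sym2.congr_right.not.2 hyz)
      ⟨x, Sym2.mem_mk_left x y, Sym2.mem_mk_left x z⟩

theorem IsProperEdgeColoring.isAlternatingFourWalk {C : Sym2 V → α}
    (hC : IsProperEdgeColoring G C) {x₀ x₁ x₂ x₃ x₄ : V} (h₀₁ : G.Adj x₀ x₁) (h₁₂ : G.Adj x₁ x₂)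
    (h₂₃ : G.Adj x₂ x₃) (h₃₄ : G.Adj x₃ x₄) (h₀₂ : x₀ ≠ x₂) (h₁₃ : x₁ ≠ x₃) (h₂₄ : x₂ ≠ x₄)
    {a b : α} (hab : ∀ e ∈ [s(x₀, x₁), s(x₁, x₂), s(x₂, x₃), s(x₃, x₄)], C e = a ∨ C e = b) :
    IsAlternatingFourWalk G C x₀ x₁ x₂ x₃ x₄ := by
  have c₁₂ : C s(x₀, x₁) ≠ C s(x₁, x₂) := by
    simpa only [Sym2.eq_swap] using hC h₀₁.symm h₁₂ h₀₂
  have c₂₃ : C s(x₁, x₂) ≠ C s(x₂, x₃) := by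
    simpa only [Sym2.eq_swap] using hC h₁₂.symm h₂₃ h₁₃
  have c₃₄ : C s(x₂, x₃) ≠ C s(x₃, x₄) := by
    simpa only [Sym2.eq_swap] using hC h₂₃.symm h₃₄ h₂₄
  simp only [List.mem_cons, List.not_mem_nil, or_false, forall_eq_or_imp, forall_eq] at hab
  refine ⟨h₀₁, h₁₂, h₂₃, h₃₄, h₀₂, h₁₃, h₂₄, ?_⟩
  grind

theorem SimpleGraph.Walk.exists_eq_cons_cons_cons_cons_of_length_eq_four {u v : V}
    (w : G.Walk u v) (h : w.length = 4) :
    ∃ (x₁ x₂ x₃ : V) (h₀₁ : G.Adj u x₁) (h₁₂ : G.Adj x₁ x₂) (h₂₃ : G.Adj x₂ x₃)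
      (h₃₄ : G.Adj x₃ v), w = .cons h₀₁ (.cons h₁₂ (.cons h₂₃ (.cons h₃₄ .nil))) := by
  match w, h with
  | .cons h₀₁ (.cons h₁₂ (.cons h₂₃ (.cons h₃₄ .nil))), _ =>
    exact ⟨_, _, _, h₀₁, h₁₂, h₂₃, h₃₄, rfl⟩

theorem IsStarEdgeColoring.not_isAlternatingFourWalk {C : Sym2 V → Fin k}
    (hC : IsStarEdgeColoring G C) (x₀ x₁ x₂ x₃ x₄ : V) :
    ¬ IsAlternatingFourWalk G C x₀ x₁ x₂ x₃ x₄ := by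
  rintro ⟨h₀₁, h₁₂, h₂₃, h₃₄, h₀₂, h₁₃, h₂₄, hc₁, hc₂⟩
  have hproper : IsProperEdgeColoring G C := isProperEdgeColoring_iff.2 hC.1
  have hbichromatic : ∃ a b, ∀ e ∈ [s(x₀, x₁), s(x₁, x₂), s(x₂, x₃), s(x₃, x₄)],
      C e = a ∨ C e = b :=
    ⟨C s(x₀, x₁), C s(x₁, x₂), by simp [hc₁, hc₂]⟩
  -- Either the walk closes a triangle at one of its ends, or it is a 4-cycle, or a path.
  by_cases h₀₃ : x₀ = x₃
  · subst h₀₃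
    exact hproper h₀₁ h₂₃.symm h₁₂.ne (hc₁.trans (congrArg C Sym2.eq_swap))
  by_cases h₁₄ : x₁ = x₄
  · subst h₁₄
    exact hproper h₁₂ h₃₄.symm h₂₃.ne (hc₂.trans (congrArg C Sym2.eq_swap))
  by_cases h₀₄ : x₀ = x₄
  · subst h₀₄
    refine hC.2.2 x₀ (.cons h₀₁ (.cons h₁₂ (.cons h₂₃ (.cons h₃₄ .nil)))) rfl ?_ hbichromatic
    simp [Walk.cons_isCycle_iff, h₀₁.ne, h₁₂.ne, h₂₃.ne, h₃₄.ne, h₀₁.ne', h₀₂, h₁₃, Ne.symm h₀₂]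
  · refine hC.2.1 x₀ x₄ (.cons h₀₁ (.cons h₁₂ (.cons h₂₃ (.cons h₃₄ .nil)))) rfl ?_ hbichromatic
    simp [h₀₁.ne, h₁₂.ne, h₂₃.ne, h₃₄.ne, h₀₂, h₁₃, h₂₄, h₀₃, h₁₄, h₀₄]

theorem isStarEdgeColoring_iff {C : Sym2 V → Fin k} :
    IsStarEdgeColoring G C ↔
      IsProperEdgeColoring G C ∧ ∀ x₀ x₁ x₂ x₃ x₄, ¬ IsAlternatingFourWalk G C x₀ x₁ x₂ x₃ x₄ := by
  refine ⟨fun hC => ⟨isProperEdgeColoring_iff.2 hC.1, hC.not_isAlternatingFourWalk⟩, ?_⟩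
  rintro ⟨hproper, halternating⟩
  refine ⟨isProperEdgeColoring_iff.1 hproper, ?_, ?_⟩
  · rintro u v w hlen hpath ⟨a, b, hab⟩
    obtain ⟨x₁, x₂, x₃, h₀₁, h₁₂, h₂₃, h₃₄, rfl⟩ :=
      w.exists_eq_cons_cons_cons_cons_of_length_eq_four hlen
    simp only [Walk.cons_isPath_iff, Walk.support_cons, Walk.support_nil, List.mem_cons,
      List.not_mem_nil, or_false, not_or] at hpath
    obtain ⟨⟨⟨-, -, h₂₄⟩, -, h₁₃, -⟩, -, h₀₂, -⟩ := hpath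
    exact halternating _ _ _ _ _ <| hproper.isAlternatingFourWalk h₀₁ h₁₂ h₂₃ h₃₄
      h₀₂ h₁₃ h₂₄ (by simpa using hab)
  · rintro u w hlen hcycle ⟨a, b, hab⟩
    obtain ⟨x₁, x₂, x₃, h₀₁, h₁₂, h₂₃, h₃₄, rfl⟩ :=
      w.exists_eq_cons_cons_cons_cons_of_length_eq_four hlen
    simp only [Walk.cons_isCycle_iff, Walk.cons_isPath_iff, Walk.support_cons, Walk.support_nil,
      List.mem_cons, List.not_mem_nil, or_false, not_or] at hcycle
    obtain ⟨⟨⟨-, -, h₂₀⟩, -, h₁₃, -⟩, -⟩ := hcycle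
    exact halternating _ _ _ _ _ <| hproper.isAlternatingFourWalk h₀₁ h₁₂ h₂₃ h₃₄
      (Ne.symm h₂₀) h₁₃ h₂₀ (by simpa using hab)

theorem isStarEdgeColoring_of_injective {C : Sym2 V → Fin k} (hC : Function.Injective C) :
    IsStarEdgeColoring G C := by
  refine isStarEdgeColoring_iff.2 ⟨fun x y z _ _ hyz h => hyz (Sym2.congr_right.1 (hC h)), ?_⟩
  rintro x₀ x₁ x₂ x₃ x₄ ⟨-, h₁₂, -, -, h₀₂, -, -, hc, -⟩
  rcases Sym2.eq_iff.1 (hC hc) with ⟨h, -⟩ | ⟨-, h⟩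
  exacts [h₀₂ h, h₁₂.ne h]

theorem starChromaticIndex_le {C : Sym2 V → Fin k} (hC : IsStarEdgeColoring G C) :
    starChromaticIndex G ≤ k :=
  Nat.sInf_le ⟨C, hC⟩

theorem exists_isStarEdgeColoring_starChromaticIndex [Finite V] (G : SimpleGraph V) :
    ∃ C : Sym2 V → Fin (starChromaticIndex G), IsStarEdgeColoring G C := by
  obtain ⟨m, ⟨e⟩⟩ := Finite.exists_equiv_fin (Sym2 V)
  exact Nat.sInf_mem (s := {k | ∃ C : Sym2 V → Fin k, IsStarEdgeColoring G C})
    ⟨m, e, isStarEdgeColoring_of_injective e.injective⟩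

section LiftColoring

variable {n : ℕ} (p : W → Fin n) (C : Sym2 (Fin n) → Fin k)

def liftColoring : Sym2 W → Fin (k + n) :=
  Sym2.lift (α := W)
    ⟨fun x y => if p x = p y then Fin.natAdd k (p x) else Fin.castAdd n (C s(p x, p y)),
    fun x y => by
      by_cases h : p x = p y
      · simp [h]
      · simp [h, Ne.symm h, Sym2.eq_swap]⟩

@[simp]
theorem liftColoring_mk (x y : W) :
    liftColoring p C s(x, y) =
      if p x = p y then Fin.natAdd k (p x) else Fin.castAdd n (C s(p x, p y)) :=
  rfl

variable {p C}

theorem ne_and_ne_and_eq_of_liftColoring_eq {x y x' y' : W} (hx : p x ≠ p x')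
    (h : liftColoring p C s(x, y) = liftColoring p C s(x', y')) :
    p x ≠ p y ∧ p x' ≠ p y' ∧ C s(p x, p y) = C s(p x', p y') := by
  simp only [liftColoring_mk] at h
  split_ifs at h with hxy hxy' hxy'
  · exact absurd ((Fin.natAdd_inj k).1 h) hx
  · simp only [Fin.ext_iff, Fin.val_natAdd, Fin.val_castAdd] at h
    omega
  · simp only [Fin.ext_iff, Fin.val_natAdd, Fin.val_castAdd] at h
    omega
  · exact ⟨hxy, hxy', Fin.castAdd_inj.1 h⟩

theorem IsStarEdgeColoring.liftColoring {H : SimpleGraph W} {G : SimpleGraph (Fin n)}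
    (hC : IsStarEdgeColoring G C) (hadj : ∀ ⦃x y⦄, H.Adj x y → p x ≠ p y → G.Adj (p x) (p y))
    (hinj : ∀ ⦃x y z⦄, H.Adj x y → H.Adj y z → x ≠ z → p x ≠ p z) :
    IsStarEdgeColoring H (liftColoring p C) := by
  obtain ⟨hproper, halternating⟩ := isStarEdgeColoring_iff.1 hC
  refine isStarEdgeColoring_iff.2 ⟨fun x y z hxy hxz hyz h => ?_, ?_⟩
  · have hpyz := hinj hxy.symm hxz hyz
    rw [Sym2.eq_swap, Sym2.eq_swap (a := x)] at h
    obtain ⟨hyx, hzx, hc⟩ := ne_and_ne_and_eq_of_liftColoring_eq hpyz h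
    refine hproper (hadj hxy hyx.symm) (hadj hxz hzx.symm) hpyz ?_
    rwa [Sym2.eq_swap, Sym2.eq_swap (a := p x)]
  · rintro x₀ x₁ x₂ x₃ x₄ ⟨h₀₁, h₁₂, h₂₃, h₃₄, h₀₂, h₁₃, h₂₄, hc₁, hc₂⟩
    obtain ⟨n₀₁, n₂₃, c₁⟩ := ne_and_ne_and_eq_of_liftColoring_eq (hinj h₀₁ h₁₂ h₀₂) hc₁
    obtain ⟨n₁₂, n₃₄, c₂⟩ := ne_and_ne_and_eq_of_liftColoring_eq (hinj h₁₂ h₂₃ h₁₃) hc₂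
    exact halternating _ _ _ _ _ ⟨hadj h₀₁ n₀₁, hadj h₁₂ n₁₂, hadj h₂₃ n₂₃, hadj h₃₄ n₃₄,
      hinj h₀₁ h₁₂ h₀₂, hinj h₁₂ h₂₃ h₁₃, hinj h₂₃ h₃₄ h₂₄, c₁, c₂⟩

theorem starChromaticIndex_le_add_of_locallyInjective {H : SimpleGraph W}
    {G : SimpleGraph (Fin n)} (p : W → Fin n)
    (hadj : ∀ ⦃x y⦄, H.Adj x y → p x ≠ p y → G.Adj (p x) (p y))
    (hinj : ∀ ⦃x y z⦄, H.Adj x y → H.Adj y z → x ≠ z → p x ≠ p z) :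
    starChromaticIndex H ≤ starChromaticIndex G + n := by
  obtain ⟨C, hC⟩ := exists_isStarEdgeColoring_starChromaticIndex G
  exact starChromaticIndex_le (hC.liftColoring hadj hinj)

end LiftColoring

theorem stmt_5_general (n : ℕ) :
    starChromaticIndex (completeBipartiteGraph (Fin n) (Fin n)) - n ≤
      starChromaticIndex (completeGraph (Fin n)) := by
  have hle := starChromaticIndex_le_add_of_locallyInjective
    (H := completeBipartiteGraph (Fin n) (Fin n)) (G := completeGraph (Fin n)) (Sum.elim id id)
    (fun _ _ _ hne => hne) (by rintro (x | x) (y | y) (z | z) <;> simp)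
  omega

theorem stmt_5 (n : ℕ) (hn : 1 ≤ n) :
    starChromaticIndex (completeBipartiteGraph (Fin n) (Fin n)) - n ≤
      starChromaticIndex (completeGraph (Fin n)) :=
  stmt_5_general n
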